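/- arXiv:1909.06796 — 3 statements merged into one kernel-verified Lean document; each statement's English description precedes it below -/
import Mathlib

section
/- Let Q be a real symmetric positive definite n×n matrix, P a real symmetric n×n matrix, Θ := Q + P·Q⁻¹·P, and √Θ the symmetric positive definite square root of Θ. Then the matrix S := (√Θ)⁻¹·P·Q⁻¹·√Θ is symmetric. -/
open Matrix

/-- Let `Q` be real symmetric positive definite, `P` real symmetric,
`Θ := Q + P·Q⁻¹·P`, and `sΘ` the symmetric positive definite square root of `Θ`.
Then `S := (√Θ)⁻¹·P·Q⁻¹·√Θ` is symmetric. -/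
theorem conjugated_PQinv_is_symmetric
    {n : ℕ} (Q P : Matrix (Fin n) (Fin n) ℝ) (hQ : Q.PosDef) (hP : P.IsSymm)
    (sΘ : Matrix (Fin n) (Fin n) ℝ) (hsΘ : sΘ.PosDef)
    (hsΘsq : sΘ * sΘ = Q + P * Q⁻¹ * P) :
    (sΘ⁻¹ * P * Q⁻¹ * sΘ).IsSymm := by
  haveI iQ : Invertible Q :=
    Q.invertibleOfIsUnitDet ((isUnit_iff_isUnit_det Q).mp hQ.isUnit)
  haveI isΘ : Invertible sΘ :=
    sΘ.invertibleOfIsUnitDet ((isUnit_iff_isUnit_det sΘ).mp hsΘ.isUnit)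
  have hQis : (Q⁻¹).IsSymm := hQ.isHermitian.inv
  have hsis : (sΘ⁻¹).IsSymm := hsΘ.isHermitian.inv
  have hss : sΘ.IsSymm := hsΘ.isHermitian
  rw [Matrix.IsSymm, transpose_mul, transpose_mul, transpose_mul, hQis, hP, hsis, hss]
  apply mul_right_injective_of_invertible sΘ
  apply mul_left_injective_of_invertible sΘ
  show sΘ * (sΘ * (Q⁻¹ * (P * sΘ⁻¹))) * sΘ = sΘ * (sΘ⁻¹ * P * Q⁻¹ * sΘ) * sΘ
  have key : (sΘ * sΘ) * (Q⁻¹ * P) = (P * Q⁻¹) * (sΘ * sΘ) := by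
    rw [hsΘsq]
    simp [add_mul, mul_add, mul_assoc, Matrix.mul_inv_cancel_left_of_invertible,
      Matrix.inv_mul_cancel_left_of_invertible, Matrix.mul_inv_of_invertible,
      Matrix.inv_mul_of_invertible]
  calc sΘ * (sΘ * (Q⁻¹ * (P * sΘ⁻¹))) * sΘ
      = (sΘ * sΘ) * (Q⁻¹ * P) * (sΘ⁻¹ * sΘ) := by noncomm_ring
    _ = (P * Q⁻¹) * (sΘ * sΘ) := by
        rw [key, Matrix.inv_mul_of_invertible, mul_one]
    _ = sΘ * (sΘ⁻¹ * P * Q⁻¹ * sΘ) * sΘ := by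
        simp only [← mul_assoc, Matrix.mul_inv_of_invertible, one_mul]
end

section
/- Let m, l be positive integers, k := m·l, σ > 0, n ≥ 1, and let N = (N_1, …, N_n) be a multi-index of nonnegative integers with |N| = N_1 + ⋯ + N_n. Define f : ℝⁿ × ℝ → ℂ by f(y,t) := e^{k‖y‖²/2} · ((∂/∂y_1)^{N_1} ⋯ (∂/∂y_n)^{N_n} (e^{−k‖y‖²}))(y) · e^{−√(−1)·l·t}. Then f satisfies −Σ_{i=1}^{n} ∂²f/∂y_i² − (m²(1 + σ‖y‖²)/σ) · ∂²f/∂t² = (k²/σ + k·n + 2k·|N|) · f pointwise on ℝⁿ × ℝ. -/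
/-- The partial derivative `∂g/∂y_i` of a function `g : ℝⁿ → ℝ`. -/
noncomputable def partialDeriv' {n : ℕ} (i : Fin n) (g : (Fin n → ℝ) → ℝ) :
    (Fin n → ℝ) → ℝ :=
  fun y => fderiv ℝ g y (Pi.single i 1)

/-- The multi-index derivative `(∂/∂y_1)^{N_1} ⋯ (∂/∂y_n)^{N_n} g`. -/
noncomputable def multiIndexDeriv {n : ℕ} (N : Fin n → ℕ) (g : (Fin n → ℝ) → ℝ) :
    (Fin n → ℝ) → ℝ :=
  (List.finRange n).foldr (fun i h => (partialDeriv' i)^[N i] h) g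

/-- The partial derivative `∂f/∂y_i` of a function `f : ℝⁿ × ℝ → ℂ`. -/
noncomputable def pderivY {n : ℕ} (i : Fin n) (f : (Fin n → ℝ) × ℝ → ℂ) :
    (Fin n → ℝ) × ℝ → ℂ :=
  fun p => fderiv ℝ f p ((Pi.single i 1 : Fin n → ℝ), 0)

/-- The partial derivative `∂f/∂t` of a function `f : ℝⁿ × ℝ → ℂ`. -/
noncomputable def pderivT {n : ℕ} (f : (Fin n → ℝ) × ℝ → ℂ) :
    (Fin n → ℝ) × ℝ → ℂ :=
  fun p => fderiv ℝ f p ((0 : Fin n → ℝ), 1)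

/-!
The Gaussian `e^{-k‖y‖²}` is a product of one-variable Gaussians, so its multi-index derivative
factorises and `f(y,t) = ∏ⱼ φ_{N_j}(y_j) · e^{-ilt}` with the Hermite functions
`φ_N(x) = e^{kx²/2} u_N(x)`, `u_N = (d/dx)^N e^{-kx²}`. The recurrence
`u_{N+2} = -2kx u_{N+1} - 2k(N+1) u_N` turns into the oscillator equation
`φ_N'' = (k²x² - k(2N+1)) φ_N`, while `∂_t² e^{-ilt} = -l² e^{-ilt}`. Summing over the
coordinates, the terms in `‖y‖²` cancel because `k = ml`, leaving the eigenvalue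
`k²/σ + kn + 2k|N|`.
-/

open Real Function Finset
open scoped ContDiff

section Gaussian

variable (k : ℝ)

noncomputable def gaussDeriv (N : ℕ) : ℝ → ℝ :=
  deriv^[N] fun x => exp (-(k * x ^ 2))

theorem contDiff_gaussDeriv (N : ℕ) : ContDiff ℝ ∞ (gaussDeriv k N) :=
  ContDiff.iterate_deriv N (by fun_prop)

theorem hasDerivAt_gaussDeriv (N : ℕ) (x : ℝ) :
    HasDerivAt (gaussDeriv k N) (gaussDeriv k (N + 1) x) x := by
  rw [show gaussDeriv k (N + 1) = deriv (gaussDeriv k N) from iterate_succ_apply' ..]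
  exact ((contDiff_gaussDeriv k N).differentiable (by simp)).differentiableAt.hasDerivAt

theorem gaussDeriv_one : gaussDeriv k 1 = fun x => -(2 * k) * x * gaussDeriv k 0 x := by
  funext x
  have h : HasDerivAt (fun x => exp (-(k * x ^ 2))) (exp (-(k * x ^ 2)) * -(k * (2 * x))) x := by
    simpa using ((hasDerivAt_pow 2 x).const_mul k).neg.exp
  rw [gaussDeriv, iterate_one, h.deriv, gaussDeriv, iterate_zero_apply]
  ring

theorem gaussDeriv_add_two (N : ℕ) :
    gaussDeriv k (N + 2) = fun x =>
      -(2 * k) * x * gaussDeriv k (N + 1) x - 2 * k * (N + 1) * gaussDeriv k N x := by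
  induction N with
  | zero =>
    funext x
    have h : HasDerivAt (fun x => -(2 * k) * x * gaussDeriv k 0 x)
        (-(2 * k) * gaussDeriv k 0 x + -(2 * k) * x * gaussDeriv k 1 x) x :=
      (((hasDerivAt_id x).const_mul _).mul (hasDerivAt_gaussDeriv k 0 x)).congr_deriv (by simp)
    rw [← gaussDeriv_one] at h
    rw [(hasDerivAt_gaussDeriv k 1 x).unique h]
    push_cast; ring
  | succ M ih =>
    funext x
    have h : HasDerivAt
        (fun x => -(2 * k) * x * gaussDeriv k (M + 1) x - 2 * k * (M + 1) * gaussDeriv k M x)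
        (-(2 * k) * gaussDeriv k (M + 1) x + -(2 * k) * x * gaussDeriv k (M + 2) x
          - 2 * k * (M + 1) * gaussDeriv k (M + 1) x) x :=
      ((((hasDerivAt_id x).const_mul _).mul (hasDerivAt_gaussDeriv k (M + 1) x)).sub
        ((hasDerivAt_gaussDeriv k M x).const_mul _)).congr_deriv (by simp)
    rw [← ih] at h
    rw [(hasDerivAt_gaussDeriv k (M + 2) x).unique h]
    push_cast; ring

noncomputable def hermiteFun (N : ℕ) (x : ℝ) : ℝ :=
  exp (k * x ^ 2 / 2) * gaussDeriv k N x

theorem contDiff_hermiteFun (N : ℕ) : ContDiff ℝ ∞ (hermiteFun k N) := by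
  unfold hermiteFun
  have := contDiff_gaussDeriv k N
  fun_prop

theorem hasDerivAt_exp_mul_sq_div_two (x : ℝ) :
    HasDerivAt (fun x => exp (k * x ^ 2 / 2)) (k * x * exp (k * x ^ 2 / 2)) x :=
  (((hasDerivAt_pow 2 x).const_mul k).div_const 2).exp.congr_deriv (by push_cast; ring)

theorem hasDerivAt_hermiteFun (N : ℕ) (x : ℝ) :
    HasDerivAt (hermiteFun k N)
      (k * x * hermiteFun k N x + exp (k * x ^ 2 / 2) * gaussDeriv k (N + 1) x) x :=
  ((hasDerivAt_exp_mul_sq_div_two k x).mul (hasDerivAt_gaussDeriv k N x)).congr_deriv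
    (by simp only [hermiteFun]; ring)

theorem deriv_deriv_hermiteFun (N : ℕ) (x : ℝ) :
    deriv (deriv (hermiteFun k N)) x = (k ^ 2 * x ^ 2 - k * (2 * N + 1)) * hermiteFun k N x := by
  have h : HasDerivAt (deriv (hermiteFun k N))
      (k * hermiteFun k N x + k * x * (k * x * hermiteFun k N x
          + exp (k * x ^ 2 / 2) * gaussDeriv k (N + 1) x)
        + (k * x * exp (k * x ^ 2 / 2) * gaussDeriv k (N + 1) x
          + exp (k * x ^ 2 / 2) * gaussDeriv k (N + 2) x)) x := by
    rw [funext fun x => (hasDerivAt_hermiteFun k N x).deriv]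
    exact ((((hasDerivAt_id x).const_mul k).mul (hasDerivAt_hermiteFun k N x)).add
      ((hasDerivAt_exp_mul_sq_div_two k x).mul (hasDerivAt_gaussDeriv k (N + 1) x))).congr_deriv
      (by simp)
  rw [h.deriv, gaussDeriv_add_two]
  simp only [hermiteFun]; ring

end Gaussian

section CoordinateProduct

theorem Finset.prod_apply_update {ι β M : Type*} [Fintype ι] [DecidableEq ι] [CommMonoid M]
    (F : ι → β → M) (g : ι → β) (i : ι) (b : β) :
    ∏ j, F j (update g i b j) = F i b * ∏ j ∈ univ.erase i, F j (g j) := by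
  simp_rw [apply_update F]
  rw [prod_update_of_mem (mem_univ i), sdiff_singleton_eq_erase]

variable {n : ℕ}

theorem partialDeriv'_eq_deriv_update {g : (Fin n → ℝ) → ℝ} {y : Fin n → ℝ}
    (hg : DifferentiableAt ℝ g y) (i : Fin n) :
    partialDeriv' i g y = deriv (fun s => g (update y i s)) (y i) :=
  (hg.hasFDerivAt.comp_hasDerivAt_of_eq (y i) (hasDerivAt_update y i (y i))
    (update_eq_self i y).symm).deriv.symm

theorem ContDiff.partialDeriv' {g : (Fin n → ℝ) → ℝ} (hg : ContDiff ℝ ∞ g) (i : Fin n) :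
    ContDiff ℝ ∞ (partialDeriv' i g) :=
  (hg.fderiv_right le_rfl).clm_apply contDiff_const

variable {v : Fin n → ℝ → ℝ}

theorem partialDeriv'_prod (hv : ∀ j, Differentiable ℝ (v j)) (i : Fin n) :
    partialDeriv' i (fun y => ∏ j, v j (y j)) =
      fun y => ∏ j, update v i (deriv (v i)) j (y j) := by
  funext y
  have hprod : DifferentiableAt ℝ (fun y : Fin n → ℝ => ∏ j, v j (y j)) y := by fun_prop
  rw [partialDeriv'_eq_deriv_update hprod]
  simp_rw [Finset.prod_apply_update v y i]
  rw [deriv_mul_const (hv i _)]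
  exact (Finset.prod_apply_update (fun j u => u (y j)) v i (deriv (v i))).symm

theorem partialDeriv'_iterate_prod (hv : ∀ j, ContDiff ℝ ∞ (v j)) (i : Fin n) (M : ℕ) :
    (partialDeriv' i)^[M] (fun y => ∏ j, v j (y j)) =
      fun y => ∏ j, update v i (deriv^[M] (v i)) j (y j) := by
  induction M with
  | zero => simp
  | succ M ih =>
    have hw : ∀ j, Differentiable ℝ (update v i (deriv^[M] (v i)) j) :=
      (forall_update_iff v (p := fun _ u => Differentiable ℝ u)).2
        ⟨((hv i).iterate_deriv M).differentiable (by simp),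
          fun j _ => (hv j).differentiable (by simp)⟩
    rw [iterate_succ_apply', ih, partialDeriv'_prod hw, update_idem, update_self,
      ← iterate_succ_apply' deriv]

theorem foldr_partialDeriv'_iterate_prod (hv : ∀ j, ContDiff ℝ ∞ (v j)) (N : Fin n → ℕ)
    {L : List (Fin n)} (hL : L.Nodup) :
    L.foldr (fun i h => (partialDeriv' i)^[N i] h) (fun y => ∏ j, v j (y j)) =
      fun y => ∏ j, (if j ∈ L then deriv^[N j] (v j) else v j) (y j) := by
  induction L with
  | nil => simp
  | cons a L ih =>
    obtain ⟨haL, hL⟩ := List.nodup_cons.mp hL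
    have hw : ∀ j, ContDiff ℝ ∞ (if j ∈ L then deriv^[N j] (v j) else v j) := fun j => by
      split_ifs
      exacts [(hv j).iterate_deriv _, hv j]
    rw [List.foldr_cons, ih hL, partialDeriv'_iterate_prod hw]
    funext y
    congr! 2 with j
    rcases eq_or_ne j a with rfl | hja
    · simp [haL]
    · simp [hja]

theorem multiIndexDeriv_prod (hv : ∀ j, ContDiff ℝ ∞ (v j)) (N : Fin n → ℕ) :
    multiIndexDeriv N (fun y => ∏ j, v j (y j)) = fun y => ∏ j, deriv^[N j] (v j) (y j) := by
  simp [multiIndexDeriv, foldr_partialDeriv'_iterate_prod hv N (List.nodup_finRange n)]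

end CoordinateProduct

section SeparatedVariables

variable {n : ℕ} {g : (Fin n → ℝ) → ℝ} {h : ℝ → ℂ}

theorem hasFDerivAt_ofReal_fst_mul_snd (hg : Differentiable ℝ g) (hh : Differentiable ℝ h)
    (p : (Fin n → ℝ) × ℝ) :
    HasFDerivAt (fun p : (Fin n → ℝ) × ℝ => (g p.1 : ℂ) * h p.2)
      ((g p.1 : ℂ) • ((ContinuousLinearMap.smulRight (1 : ℝ →L[ℝ] ℝ) (deriv h p.2)).comp
          (ContinuousLinearMap.snd ℝ _ _)) +
        h p.2 • (Complex.ofRealCLM.comp ((fderiv ℝ g p.1).comp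
          (ContinuousLinearMap.fst ℝ _ _)))) p :=
  ((Complex.ofRealCLM.hasFDerivAt.comp _ (hg p.1).hasFDerivAt).comp p hasFDerivAt_fst).mul
    ((hh p.2).hasDerivAt.hasFDerivAt.comp p hasFDerivAt_snd)

theorem pderivY_ofReal_fst_mul_snd (hg : Differentiable ℝ g) (hh : Differentiable ℝ h)
    (i : Fin n) :
    pderivY i (fun p => (g p.1 : ℂ) * h p.2) =
      fun p => (partialDeriv' i g p.1 : ℂ) * h p.2 := by
  funext p
  rw [pderivY, (hasFDerivAt_ofReal_fst_mul_snd hg hh p).fderiv, partialDeriv']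
  simp [mul_comm]

theorem pderivT_ofReal_fst_mul_snd (hg : Differentiable ℝ g) (hh : Differentiable ℝ h) :
    pderivT (fun p => (g p.1 : ℂ) * h p.2) = fun p => (g p.1 : ℂ) * deriv h p.2 := by
  funext p
  rw [pderivT, (hasFDerivAt_ofReal_fst_mul_snd hg hh p).fderiv]
  simp

end SeparatedVariables

theorem deriv_cexp_mul_ofReal (a : ℂ) :
    deriv (fun t : ℝ => Complex.exp (a * t)) = fun t : ℝ => a * Complex.exp (a * t) := by
  funext t
  exact (((Complex.ofRealCLM.hasDerivAt (x := t)).const_mul a).cexp.congr_deriv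
    (by simp [mul_comm])).deriv

section HermiteProduct

variable {n : ℕ} (k : ℝ) (N : Fin n → ℕ)

noncomputable def hermiteProd (y : Fin n → ℝ) : ℝ :=
  ∏ j, hermiteFun k (N j) (y j)

theorem contDiff_hermiteProd : ContDiff ℝ ∞ (hermiteProd k N) := by
  unfold hermiteProd
  have := fun j => contDiff_hermiteFun k (N j)
  fun_prop

theorem exp_mul_multiIndexDeriv_gaussian (y : Fin n → ℝ) :
    exp (k * (∑ i, y i ^ 2) / 2) * multiIndexDeriv N (fun y' => exp (-(k * ∑ i, y' i ^ 2))) y =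
      hermiteProd k N y := by
  have hprod : (fun y' : Fin n → ℝ => exp (-(k * ∑ i, y' i ^ 2))) =
      fun y' => ∏ j, exp (-(k * y' j ^ 2)) := by
    funext y'
    rw [← exp_sum, mul_sum, sum_neg_distrib]
  rw [hprod, multiIndexDeriv_prod (v := fun _ x => exp (-(k * x ^ 2))) (fun _ => by fun_prop),
    mul_sum, sum_div, exp_sum, ← prod_mul_distrib]
  rfl

theorem partialDeriv'_partialDeriv'_hermiteProd (i : Fin n) (y : Fin n → ℝ) :
    partialDeriv' i (partialDeriv' i (hermiteProd k N)) y =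
      (k ^ 2 * y i ^ 2 - k * (2 * N i + 1)) * hermiteProd k N y := by
  change (partialDeriv' i)^[2] (fun y => ∏ j, hermiteFun k (N j) (y j)) y = _
  rw [congrFun (partialDeriv'_iterate_prod (fun j => contDiff_hermiteFun k (N j)) i 2) y,
    Finset.prod_apply_update (fun j (u : ℝ → ℝ) => u (y j)), iterate_succ_apply', iterate_one,
    deriv_deriv_hermiteFun, mul_assoc, hermiteProd,
    ← mul_prod_erase univ (fun j => hermiteFun k (N j) (y j)) (mem_univ i)]

end HermiteProduct

theorem hermite_eigenfunction_on_limit_space_general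
    {n : ℕ} (m l : ℕ) (k : ℕ) (hk : k = m * l)
    (σ : ℝ) (hσ : 0 < σ) (N : Fin n → ℕ)
    (f : (Fin n → ℝ) × ℝ → ℂ)
    (hf : f = fun p =>
      ((Real.exp ((k : ℝ) * (∑ i, p.1 i ^ 2) / 2)
        * multiIndexDeriv N (fun y' => Real.exp (-((k : ℝ) * ∑ i, y' i ^ 2))) p.1 : ℝ) : ℂ)
      * Complex.exp (-Complex.I * (l : ℂ) * (p.2 : ℂ))) :
    ∀ (y : Fin n → ℝ) (t : ℝ),
      -(∑ i, pderivY i (pderivY i f) (y, t))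
        - ((((m : ℝ) ^ 2 * (1 + σ * ∑ i, y i ^ 2) / σ : ℝ)) : ℂ)
            * pderivT (pderivT f) (y, t)
      = ((((k : ℝ) ^ 2 / σ + (k : ℝ) * (n : ℝ)
            + 2 * (k : ℝ) * (∑ i, (N i : ℝ)) : ℝ)) : ℂ) * f (y, t) := by
  intro y t
  set e : ℝ → ℂ := fun s => Complex.exp (-Complex.I * l * s)
  have hsep : f = fun p => (hermiteProd k N p.1 : ℂ) * e p.2 := by
    simp only [hf, exp_mul_multiIndexDeriv_gaussian]
    rfl
  have hG := contDiff_hermiteProd (k : ℝ) N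
  have he : Differentiable ℝ e := by fun_prop
  have hY (i : Fin n) : pderivY i (pderivY i f) (y, t) =
      ((k ^ 2 * y i ^ 2 - k * (2 * N i + 1) : ℝ) : ℂ) * f (y, t) := by
    rw [hsep, pderivY_ofReal_fst_mul_snd (hG.differentiable (by simp)) he,
      pderivY_ofReal_fst_mul_snd ((hG.partialDeriv' i).differentiable (by simp)) he]
    simp only [partialDeriv'_partialDeriv'_hermiteProd]
    push_cast; ring
  have hT : pderivT (pderivT f) (y, t) = -(l ^ 2 : ℂ) * f (y, t) := by
    have he' : deriv e = fun s => -Complex.I * l * e s := deriv_cexp_mul_ofReal _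
    rw [hsep, pderivT_ofReal_fst_mul_snd (hG.differentiable (by simp)) he,
      pderivT_ofReal_fst_mul_snd (h := deriv e) (hG.differentiable (by simp))
        (by rw [he']; fun_prop),
      he', deriv_const_mul_field', he']
    linear_combination (hermiteProd k N y : ℂ) * l ^ 2 * e t * Complex.I_sq
  have heigen : -(∑ i, ((k : ℝ) ^ 2 * y i ^ 2 - k * (2 * N i + 1)))
      + (m : ℝ) ^ 2 * (1 + σ * ∑ i, y i ^ 2) / σ * l ^ 2
      = (k : ℝ) ^ 2 / σ + k * n + 2 * k * ∑ i, (N i : ℝ) := by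
    simp only [sum_sub_distrib, ← mul_sum, mul_add, sum_add_distrib, sum_const, card_univ,
      Fintype.card_fin, hk]
    push_cast
    field_simp
    ring
  rw [sum_congr rfl fun i _ => hY i, hT, ← sum_mul]
  linear_combination (norm := (push_cast; ring))
    f (y, t) * congrArg (fun x : ℝ => (x : ℂ)) heigen

/-- Let `m, l` be positive integers, `k := m·l`, `σ > 0`, `n ≥ 1`, and `N` a
multi-index with `|N| = N_1 + ⋯ + N_n`.  Define
`f(y,t) := e^{k‖y‖²/2}·((∂/∂y)^N e^{−k‖y‖²})(y)·e^{−√(−1)·l·t}`.  Then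
`−Σ_i ∂²f/∂y_i² − (m²(1+σ‖y‖²)/σ)·∂²f/∂t² = (k²/σ + kn + 2k|N|)·f` pointwise. -/
theorem hermite_eigenfunction_on_limit_space
    {n : ℕ} (hn : 1 ≤ n) (m l : ℕ) (hm : 0 < m) (hl : 0 < l) (k : ℕ) (hk : k = m * l)
    (σ : ℝ) (hσ : 0 < σ) (N : Fin n → ℕ)
    (f : (Fin n → ℝ) × ℝ → ℂ)
    (hf : f = fun p =>
      ((Real.exp ((k : ℝ) * (∑ i, p.1 i ^ 2) / 2)
        * multiIndexDeriv N (fun y' => Real.exp (-((k : ℝ) * ∑ i, y' i ^ 2))) p.1 : ℝ) : ℂ)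
      * Complex.exp (-Complex.I * (l : ℂ) * (p.2 : ℂ))) :
    ∀ (y : Fin n → ℝ) (t : ℝ),
      -(∑ i, pderivY i (pderivY i f) (y, t))
        - ((((m : ℝ) ^ 2 * (1 + σ * ∑ i, y i ^ 2) / σ : ℝ)) : ℂ)
            * pderivT (pderivT f) (y, t)
      = ((((k : ℝ) ^ 2 / σ + (k : ℝ) * (n : ℝ)
            + 2 * (k : ℝ) * (∑ i, (N i : ℝ)) : ℝ)) : ℂ) * f (y, t) :=
  hermite_eigenfunction_on_limit_space_general m l k hk σ hσ N f hf
end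

section
/- Let σ > 0, y ∈ ℝⁿ, and let S be any real n×n matrix. Set K := I + σ·y·ᵀy (an n×n symmetric positive definite matrix). Then for all u ∈ ℝ and a, b ∈ ℝⁿ the following identity of quadratic forms holds: σu² − 2σu·⟨y, a⟩ + ᵀa·K·a + ᵀb·(I + ᵀS·S)·b − 2·ᵀb·ᵀS·a = ᵀw·K·w + (σ/(1 + σ‖y‖²))·(u − ᵀy·S·b)² + ‖b‖², where w := a − σu·K⁻¹·y − K⁻¹·S·b. -/
/-!
By the Sherman–Morrison formula `K⁻¹ = 1 - (σ / (1 + σ‖y‖²)) • y yᵀ`, so `w` is `a - S b` plus an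
explicit multiple of `y`. Both sides then become rational expressions in `u`, `σ` and the pairwise
inner products of `a`, `y`, `S b`, with the single denominator `1 + σ‖y‖²`, and the identity is
checked by clearing it. Positive definiteness holds because `K` is `1` plus a positive semidefinite
rank-one matrix.
-/

open Matrix

namespace Matrix

variable {ι 𝕜 : Type*} [Fintype ι] [DecidableEq ι] [Field 𝕜]

theorem one_add_vecMulVec_mulVec (u v x : ι → 𝕜) :
    (1 + vecMulVec u v) *ᵥ x = x + (v ⬝ᵥ x) • u := by
  rw [add_mulVec, one_mulVec, vecMulVec_mulVec, op_smul_eq_smul]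

theorem dotProduct_one_add_vecMulVec_mulVec (u v w x : ι → 𝕜) :
    w ⬝ᵥ (1 + vecMulVec u v) *ᵥ x = w ⬝ᵥ x + (w ⬝ᵥ u) * (v ⬝ᵥ x) := by
  rw [one_add_vecMulVec_mulVec, dotProduct_add, dotProduct_smul, smul_eq_mul, mul_comm]

/-- The Sherman–Morrison formula. -/
theorem inv_one_add_vecMulVec (u v : ι → 𝕜) (h : 1 + v ⬝ᵥ u ≠ 0) :
    (1 + vecMulVec u v)⁻¹ = 1 - (1 + v ⬝ᵥ u)⁻¹ • vecMulVec u v := by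
  refine inv_eq_right_inv ?_
  have hsq : vecMulVec u v * vecMulVec u v = (v ⬝ᵥ u) • vecMulVec u v := by
    rw [vecMulVec_mul_vecMulVec, vecMulVec_smul]
  have hcoeff : (1 + v ⬝ᵥ u)⁻¹ + (1 + v ⬝ᵥ u)⁻¹ * v ⬝ᵥ u = 1 := by
    field_simp
  rw [add_mul, one_mul, mul_sub, mul_one, mul_smul_comm, hsq, smul_smul, sub_add_sub_comm,
    add_sub_assoc, ← add_smul, hcoeff, one_smul, sub_self, add_zero]

theorem inv_one_add_vecMulVec_mulVec (u v x : ι → 𝕜) (h : 1 + v ⬝ᵥ u ≠ 0) :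
    (1 + vecMulVec u v)⁻¹ *ᵥ x = x - ((v ⬝ᵥ x) / (1 + v ⬝ᵥ u)) • u := by
  rw [inv_one_add_vecMulVec u v h, sub_mulVec, one_mulVec, smul_mulVec, vecMulVec_mulVec,
    op_smul_eq_smul, smul_smul, inv_mul_eq_div]

theorem completion_of_square_one_add_smul_vecMulVec (σ u : 𝕜) (y a s : ι → 𝕜)
    (hc : 1 + σ * (y ⬝ᵥ y) ≠ 0) :
    let K := 1 + σ • vecMulVec y y
    let w := a - (σ * u) • (K⁻¹ *ᵥ y) - K⁻¹ *ᵥ s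
    σ * u ^ 2 - 2 * σ * u * (y ⬝ᵥ a) + a ⬝ᵥ K *ᵥ a + s ⬝ᵥ s - 2 * (s ⬝ᵥ a)
      = w ⬝ᵥ K *ᵥ w + σ / (1 + σ * (y ⬝ᵥ y)) * (u - y ⬝ᵥ s) ^ 2 := by
  intro K w
  have hK : K = 1 + vecMulVec (σ • y) y := by rw [smul_vecMulVec]
  have hc' : 1 + y ⬝ᵥ (σ • y) ≠ 0 := by rwa [dotProduct_smul, smul_eq_mul]
  have hw : w = a - s + ((σ * (y ⬝ᵥ s) - σ * u) / (1 + σ * (y ⬝ᵥ y))) • y := by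
    simp only [w, hK, inv_one_add_vecMulVec_mulVec _ _ _ hc', dotProduct_smul, smul_eq_mul]
    match_scalars <;> field_simp
    ring
  rw [hw, hK]
  simp only [dotProduct_one_add_vecMulVec_mulVec, dotProduct_add, dotProduct_sub, add_dotProduct,
    sub_dotProduct, smul_dotProduct, dotProduct_smul, smul_eq_mul]
  rw [dotProduct_comm a y, dotProduct_comm s y, dotProduct_comm s a]
  field_simp
  ring

end Matrix

/-- Let `σ > 0`, `y ∈ ℝⁿ`, `S` any real `n×n` matrix and
`K := I + σ·y·ᵀy`.  Then `K` is symmetric positive definite and for all `u ∈ ℝ`,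
`a, b ∈ ℝⁿ` the completion-of-square identity
`σu² − 2σu⟨y,a⟩ + ᵀa·K·a + ᵀb·(I + ᵀS·S)·b − 2·ᵀb·ᵀS·a
  = ᵀw·K·w + (σ/(1+σ‖y‖²))·(u − ᵀy·S·b)² + ‖b‖²`
holds, where `w := a − σu·K⁻¹·y − K⁻¹·S·b`. -/
theorem completion_of_square_connection_metric
    {n : ℕ} (σ : ℝ) (hσ : 0 < σ) (y : Fin n → ℝ) (S : Matrix (Fin n) (Fin n) ℝ)
    (K : Matrix (Fin n) (Fin n) ℝ) (hK : K = 1 + σ • vecMulVec y y) :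
    K.PosDef ∧
    ∀ (u : ℝ) (a b : Fin n → ℝ) (w : Fin n → ℝ),
      w = a - (σ * u) • (K⁻¹ *ᵥ y) - K⁻¹ *ᵥ (S *ᵥ b) →
      σ * u ^ 2 - 2 * σ * u * (y ⬝ᵥ a) + a ⬝ᵥ K *ᵥ a
          + b ⬝ᵥ (1 + Sᵀ * S) *ᵥ b - 2 * (b ⬝ᵥ Sᵀ *ᵥ a)
        = w ⬝ᵥ K *ᵥ w
          + σ / (1 + σ * (y ⬝ᵥ y)) * (u - y ⬝ᵥ (S *ᵥ b)) ^ 2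
          + b ⬝ᵥ b := by
  subst hK
  refine ⟨?_, fun u a b w hw => ?_⟩
  · simpa using PosDef.one.add_posSemidef ((posSemidef_vecMulVec_self_star y).smul hσ.le)
  have hc : 1 + σ * (y ⬝ᵥ y) ≠ 0 := by
    have : 0 ≤ y ⬝ᵥ y := by simpa using dotProduct_star_self_nonneg y
    positivity
  have hSt : ∀ v, b ⬝ᵥ Sᵀ *ᵥ v = S *ᵥ b ⬝ᵥ v := fun v => by
    rw [dotProduct_mulVec, vecMul_transpose]
  have hSb : b ⬝ᵥ (1 + Sᵀ * S) *ᵥ b = b ⬝ᵥ b + S *ᵥ b ⬝ᵥ S *ᵥ b := by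
    rw [add_mulVec, one_mulVec, dotProduct_add, ← mulVec_mulVec, hSt]
  rw [hSb, hSt, hw]
  linarith [completion_of_square_one_add_smul_vecMulVec σ u y a (S *ᵥ b) hc]
end
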